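/- Let a_n(i,j) be the number of permutations of [n] avoiding {1243, 1342} with first letter i and second letter j. Then for 1 ≤ i ≤ n-2, a_n(i, i+1) = a_n(i, i+2). -/
import Mathlib


/-- `π` contains the pattern `p` (given as the sequence of its values). -/
def ContainsPat {n k : ℕ} (π : Equiv.Perm (Fin n)) (p : Fin k → ℕ) : Prop :=
  ∃ f : Fin k → Fin n, StrictMono f ∧ ∀ a b : Fin k, p a < p b ↔ π (f a) < π (f b)

/-- The first letter of `π` (one-line notation, values in `[n]`) is `i`. -/
def FirstIs {n : ℕ} (π : Equiv.Perm (Fin n)) (i : ℕ) : Prop :=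
  ∀ j : Fin n, (j : ℕ) = 0 → (π j : ℕ) + 1 = i

/-- The second letter of `π` (one-line notation, values in `[n]`) is `i`. -/
def SecondIs {n : ℕ} (π : Equiv.Perm (Fin n)) (i : ℕ) : Prop :=
  ∀ j : Fin n, (j : ℕ) = 1 → (π j : ℕ) + 1 = i

/-- The number of permutations of `[n]` avoiding both patterns with first letter `i`
and second letter `j`. -/
noncomputable def a (n i j : ℕ) : ℕ :=
  Nat.card {π : Equiv.Perm (Fin n) //
    ¬ ContainsPat π ![1, 2, 4, 3] ∧ ¬ ContainsPat π ![1, 3, 4, 2] ∧ FirstIs π i ∧ SecondIs π j}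


lemma contains_gen_iff {n : ℕ} (π : Equiv.Perm (Fin n)) (p : Fin 4 → ℕ) :
    ContainsPat π p ↔
      ∃ a b c d : Fin n, a < b ∧ b < c ∧ c < d ∧
        (∀ x y : Fin 4, p x < p y ↔
          π (if (x:ℕ) = 0 then a else if (x:ℕ) = 1 then b else if (x:ℕ) = 2 then c else d) <
          π (if (y:ℕ) = 0 then a else if (y:ℕ) = 1 then b else if (y:ℕ) = 2 then c else d)) := by
  constructor
  · rintro ⟨f, hf, hp⟩
    refine ⟨f 0, f 1, f 2, f 3, hf (by decide), hf (by decide), hf (by decide), ?_⟩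
    intro x y
    have e : ∀ z : Fin 4,
        (if (z:ℕ) = 0 then f 0 else if (z:ℕ) = 1 then f 1 else if (z:ℕ) = 2 then f 2 else f 3)
          = f z := by
      intro z; fin_cases z <;> rfl
    rw [e x, e y]; exact hp x y
  · rintro ⟨a, b, c, d, hab, hbc, hcd, hiff⟩
    refine ⟨fun x => if (x:ℕ) = 0 then a else if (x:ℕ) = 1 then b else if (x:ℕ) = 2 then c else d,
      ?_, hiff⟩
    intro x y hxy
    have hx := x.isLt; have hy := y.isLt
    rw [Fin.lt_def] at hxy
    have t1 : a < c := lt_trans hab hbc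
    have t2 : b < d := lt_trans hbc hcd
    have t3 : a < d := lt_trans t1 hcd
    show (if (x:ℕ) = 0 then a else if (x:ℕ) = 1 then b else if (x:ℕ) = 2 then c else d) <
      (if (y:ℕ) = 0 then a else if (y:ℕ) = 1 then b else if (y:ℕ) = 2 then c else d)
    split_ifs <;> first | (exfalso; omega) | assumption

lemma contains1243_iff {n : ℕ} (π : Equiv.Perm (Fin n)) :
    ContainsPat π ![1,2,4,3] ↔
      ∃ a b c d : Fin n, a < b ∧ b < c ∧ c < d ∧
        π a < π b ∧ π b < π d ∧ π d < π c := by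
  rw [contains_gen_iff]
  have hp : ∀ z : Fin 4, (![1,2,4,3] : Fin 4 → ℕ) z =
      if (z:ℕ) = 0 then 1 else if (z:ℕ) = 1 then 2 else if (z:ℕ) = 2 then 4 else 3 := by
    intro z; fin_cases z <;> rfl
  constructor
  · rintro ⟨a, b, c, d, hab, hbc, hcd, hiff⟩
    refine ⟨a, b, c, d, hab, hbc, hcd, ?_, ?_, ?_⟩
    · have e := hiff ⟨0, by omega⟩ ⟨1, by omega⟩; norm_num at e; exact e
    · have e := hiff ⟨1, by omega⟩ ⟨3, by omega⟩; norm_num at e; exact e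
    · have e := hiff ⟨3, by omega⟩ ⟨2, by omega⟩; norm_num at e; exact e
  · rintro ⟨a, b, c, d, hab, hbc, hcd, h1, h2, h3⟩
    refine ⟨a, b, c, d, hab, hbc, hcd, ?_⟩
    intro x y
    rw [hp x, hp y, Fin.lt_def] at *
    split_ifs <;> omega

lemma contains1342_iff {n : ℕ} (π : Equiv.Perm (Fin n)) :
    ContainsPat π ![1,3,4,2] ↔
      ∃ a b c d : Fin n, a < b ∧ b < c ∧ c < d ∧
        π a < π d ∧ π d < π b ∧ π b < π c := by
  rw [contains_gen_iff]
  have hp : ∀ z : Fin 4, (![1,3,4,2] : Fin 4 → ℕ) z =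
      if (z:ℕ) = 0 then 1 else if (z:ℕ) = 1 then 3 else if (z:ℕ) = 2 then 4 else 2 := by
    intro z; fin_cases z <;> rfl
  constructor
  · rintro ⟨a, b, c, d, hab, hbc, hcd, hiff⟩
    refine ⟨a, b, c, d, hab, hbc, hcd, ?_, ?_, ?_⟩
    · have e := hiff ⟨0, by omega⟩ ⟨3, by omega⟩; norm_num at e; exact e
    · have e := hiff ⟨3, by omega⟩ ⟨1, by omega⟩; norm_num at e; exact e
    · have e := hiff ⟨1, by omega⟩ ⟨2, by omega⟩; norm_num at e; exact e
  · rintro ⟨a, b, c, d, hab, hbc, hcd, h1, h2, h3⟩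
    refine ⟨a, b, c, d, hab, hbc, hcd, ?_⟩
    intro x y
    rw [hp x, hp y, Fin.lt_def] at *
    split_ifs <;> omega

lemma swap_lt {n : ℕ} {u v : Fin n} (hv : (v : ℕ) = (u : ℕ) + 1) {x y : Fin n}
    (hxy : x < y) (h : ¬(x = u ∧ y = v)) :
    Equiv.swap u v x < Equiv.swap u v y := by
  rw [Equiv.swap_apply_def, Equiv.swap_apply_def, Fin.lt_def]
  rw [Fin.lt_def] at hxy
  simp only [Fin.ext_iff] at h
  split_ifs <;> simp_all [Fin.ext_iff] <;> omega

lemma key {n i : ℕ} (hi : 1 ≤ i) {u v z0 z1 : Fin n} (hu : (u:ℕ) = i) (hv : (v:ℕ) = i+1)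
    (hz0 : (z0:ℕ) = 0) (hz1 : (z1:ℕ) = 1)
    (π : Equiv.Perm (Fin n))
    (h0 : (π z0 : ℕ) + 1 = i) (h1 : (π z1 : ℕ) = i ∨ (π z1 : ℕ) = i + 1)
    (hc : ContainsPat π ![1,2,4,3] ∨ ContainsPat π ![1,3,4,2]) :
    ContainsPat (π.trans (Equiv.swap u v)) ![1,2,4,3] ∨
      ContainsPat (π.trans (Equiv.swap u v)) ![1,3,4,2] := by
  have hσa : ∀ x, (π.trans (Equiv.swap u v)) x = Equiv.swap u v (π x) := fun _ => rfl
  have hvu : (v:ℕ) = (u:ℕ) + 1 := by omega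
  have hswu : Equiv.swap u v u = v := Equiv.swap_apply_left u v
  have hswv : Equiv.swap u v v = u := Equiv.swap_apply_right u v
  have hfix : ∀ x : Fin n, (π x : ℕ) ≠ i → (π x : ℕ) ≠ i + 1 → Equiv.swap u v (π x) = π x := by
    intro x h h'
    exact Equiv.swap_apply_of_ne_of_ne (fun e => h (by rw [e]; exact hu))
      (fun e => h' (by rw [e]; exact hv))
  have hs0 : (π.trans (Equiv.swap u v)) z0 = π z0 := by
    rw [hσa]; exact hfix z0 (by omega) (by omega)
  rcases hc with hC | hC
  · rw [contains1243_iff] at hC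
    obtain ⟨a, b, c, d, hab, hbc, hcd, g1, g2, g3⟩ := hC
    have hab' := Fin.lt_def.mp hab
    have hbc' := Fin.lt_def.mp hbc
    have hcd' := Fin.lt_def.mp hcd
    have g1' := Fin.lt_def.mp g1
    have g2' := Fin.lt_def.mp g2
    have g3' := Fin.lt_def.mp g3
    rcases h1 with hz | hz
    · -- second letter value i
      by_cases c1 : (π a : ℕ) = i ∧ (π b : ℕ) = i + 1
      · have ha : a = z1 := π.injective (Fin.ext (by omega))
        have ha' := congrArg Fin.val ha
        have hπb : π b = v := Fin.ext (by omega)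
        have hσb : (π.trans (Equiv.swap u v)) b = u := by rw [hσa, hπb, hswv]
        have hσc : (π.trans (Equiv.swap u v)) c = π c := by
          rw [hσa]; exact hfix c (by omega) (by omega)
        have hσd : (π.trans (Equiv.swap u v)) d = π d := by
          rw [hσa]; exact hfix d (by omega) (by omega)
        left; rw [contains1243_iff]
        refine ⟨z0, b, c, d, ?_, hbc, hcd, ?_, ?_, ?_⟩
        · rw [Fin.lt_def]; omega
        · rw [hs0, hσb, Fin.lt_def]; omega
        · rw [hσb, hσd, Fin.lt_def]; omega
        · rw [hσd, hσc, Fin.lt_def]; omega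
      · by_cases c2 : (π b : ℕ) = i ∧ (π d : ℕ) = i + 1
        · have hb : b = z1 := π.injective (Fin.ext (by omega))
          have hb' := congrArg Fin.val hb
          have ha0 : a = z0 := Fin.ext (by omega)
          have ha0' : (π a : ℕ) + 1 = i := by rw [ha0]; exact h0
          have hπz1 : π z1 = u := Fin.ext (by omega)
          have hπd : π d = v := Fin.ext (by omega)
          have hσz1 : (π.trans (Equiv.swap u v)) z1 = v := by rw [hσa, hπz1, hswu]
          have hσd : (π.trans (Equiv.swap u v)) d = u := by rw [hσa, hπd, hswv]
          have hσc : (π.trans (Equiv.swap u v)) c = π c := by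
            rw [hσa]; exact hfix c (by omega) (by omega)
          right; rw [contains1342_iff]
          refine ⟨z0, z1, c, d, ?_, ?_, hcd, ?_, ?_, ?_⟩
          · rw [Fin.lt_def]; omega
          · rw [Fin.lt_def]; omega
          · rw [hs0, hσd, Fin.lt_def]; omega
          · rw [hσd, hσz1, Fin.lt_def]; omega
          · rw [hσz1, hσc, Fin.lt_def]; omega
        · have c3 : ¬((π d : ℕ) = i ∧ (π c : ℕ) = i + 1) := by
            rintro ⟨hd, -⟩
            have : d = z1 := π.injective (Fin.ext (by omega))
            have := congrArg Fin.val this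
            omega
          left; rw [contains1243_iff]
          refine ⟨a, b, c, d, hab, hbc, hcd, ?_, ?_, ?_⟩
          · rw [hσa, hσa]
            exact swap_lt hvu g1 (fun ⟨e1, e2⟩ => c1 ⟨by rw [e1]; exact hu, by rw [e2]; exact hv⟩)
          · rw [hσa, hσa]
            exact swap_lt hvu g2 (fun ⟨e1, e2⟩ => c2 ⟨by rw [e1]; exact hu, by rw [e2]; exact hv⟩)
          · rw [hσa, hσa]
            exact swap_lt hvu g3 (fun ⟨e1, e2⟩ => c3 ⟨by rw [e1]; exact hu, by rw [e2]; exact hv⟩)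
    · -- second letter value i+1
      have hπz1 : π z1 = v := Fin.ext (by omega)
      have c1 : ¬((π a : ℕ) = i ∧ (π b : ℕ) = i + 1) := by
        rintro ⟨ha', hb'⟩
        have hb : b = z1 := π.injective (Fin.ext (by omega))
        have hb2 := congrArg Fin.val hb
        have ha0 : a = z0 := Fin.ext (by omega)
        have : (π a : ℕ) + 1 = i := by rw [ha0]; exact h0
        omega
      have c2 : ¬((π b : ℕ) = i ∧ (π d : ℕ) = i + 1) := by
        rintro ⟨-, hd⟩
        have : d = z1 := π.injective (Fin.ext (by omega))
        have := congrArg Fin.val this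
        omega
      have c3 : ¬((π d : ℕ) = i ∧ (π c : ℕ) = i + 1) := by
        rintro ⟨-, hc'⟩
        have : c = z1 := π.injective (Fin.ext (by omega))
        have := congrArg Fin.val this
        omega
      left; rw [contains1243_iff]
      refine ⟨a, b, c, d, hab, hbc, hcd, ?_, ?_, ?_⟩
      · rw [hσa, hσa]
        exact swap_lt hvu g1 (fun ⟨e1, e2⟩ => c1 ⟨by rw [e1]; exact hu, by rw [e2]; exact hv⟩)
      · rw [hσa, hσa]
        exact swap_lt hvu g2 (fun ⟨e1, e2⟩ => c2 ⟨by rw [e1]; exact hu, by rw [e2]; exact hv⟩)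
      · rw [hσa, hσa]
        exact swap_lt hvu g3 (fun ⟨e1, e2⟩ => c3 ⟨by rw [e1]; exact hu, by rw [e2]; exact hv⟩)
  · rw [contains1342_iff] at hC
    obtain ⟨a, b, c, d, hab, hbc, hcd, g1, g2, g3⟩ := hC
    have hab' := Fin.lt_def.mp hab
    have hbc' := Fin.lt_def.mp hbc
    have hcd' := Fin.lt_def.mp hcd
    have g1' := Fin.lt_def.mp g1
    have g2' := Fin.lt_def.mp g2
    have g3' := Fin.lt_def.mp g3
    rcases h1 with hz | hz
    · -- second letter value i
      by_cases c1 : (π a : ℕ) = i ∧ (π d : ℕ) = i + 1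
      · have ha : a = z1 := π.injective (Fin.ext (by omega))
        have ha' := congrArg Fin.val ha
        have hπd : π d = v := Fin.ext (by omega)
        have hσd : (π.trans (Equiv.swap u v)) d = u := by rw [hσa, hπd, hswv]
        have hσb : (π.trans (Equiv.swap u v)) b = π b := by
          rw [hσa]; exact hfix b (by omega) (by omega)
        have hσc : (π.trans (Equiv.swap u v)) c = π c := by
          rw [hσa]; exact hfix c (by omega) (by omega)
        right; rw [contains1342_iff]
        refine ⟨z0, b, c, d, ?_, hbc, hcd, ?_, ?_, ?_⟩
        · rw [Fin.lt_def]; omega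
        · rw [hs0, hσd, Fin.lt_def]; omega
        · rw [hσd, hσb, Fin.lt_def]; omega
        · rw [hσb, hσc, Fin.lt_def]; omega
      · by_cases c2 : (π b : ℕ) = i ∧ (π c : ℕ) = i + 1
        · exfalso
          have hb : b = z1 := π.injective (Fin.ext (by omega))
          have hb' := congrArg Fin.val hb
          have ha0 : a = z0 := Fin.ext (by omega)
          have : (π a : ℕ) + 1 = i := by rw [ha0]; exact h0
          omega
        · have c3 : ¬((π d : ℕ) = i ∧ (π b : ℕ) = i + 1) := by
            rintro ⟨hd, -⟩
            have : d = z1 := π.injective (Fin.ext (by omega))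
            have := congrArg Fin.val this
            omega
          right; rw [contains1342_iff]
          refine ⟨a, b, c, d, hab, hbc, hcd, ?_, ?_, ?_⟩
          · rw [hσa, hσa]
            exact swap_lt hvu g1 (fun ⟨e1, e2⟩ => c1 ⟨by rw [e1]; exact hu, by rw [e2]; exact hv⟩)
          · rw [hσa, hσa]
            exact swap_lt hvu g2 (fun ⟨e1, e2⟩ => c3 ⟨by rw [e1]; exact hu, by rw [e2]; exact hv⟩)
          · rw [hσa, hσa]
            exact swap_lt hvu g3 (fun ⟨e1, e2⟩ => c2 ⟨by rw [e1]; exact hu, by rw [e2]; exact hv⟩)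
    · -- second letter value i+1
      have hπz1 : π z1 = v := Fin.ext (by omega)
      by_cases c2 : (π d : ℕ) = i ∧ (π b : ℕ) = i + 1
      · have hb : b = z1 := π.injective (Fin.ext (by omega))
        have hb' := congrArg Fin.val hb
        have hπd : π d = u := Fin.ext (by omega)
        have hσz1 : (π.trans (Equiv.swap u v)) z1 = u := by rw [hσa, hπz1, hswv]
        have hσd : (π.trans (Equiv.swap u v)) d = v := by rw [hσa, hπd, hswu]
        have hσc : (π.trans (Equiv.swap u v)) c = π c := by
          rw [hσa]; exact hfix c (by omega) (by omega)
        left; rw [contains1243_iff]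
        refine ⟨z0, z1, c, d, ?_, ?_, hcd, ?_, ?_, ?_⟩
        · rw [Fin.lt_def]; omega
        · rw [Fin.lt_def]; omega
        · rw [hs0, hσz1, Fin.lt_def]; omega
        · rw [hσz1, hσd, Fin.lt_def]; omega
        · rw [hσd, hσc, Fin.lt_def]; omega
      · have c1 : ¬((π a : ℕ) = i ∧ (π d : ℕ) = i + 1) := by
          rintro ⟨-, hd⟩
          have : d = z1 := π.injective (Fin.ext (by omega))
          have := congrArg Fin.val this
          omega
        have c3 : ¬((π b : ℕ) = i ∧ (π c : ℕ) = i + 1) := by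
          rintro ⟨-, hc'⟩
          have : c = z1 := π.injective (Fin.ext (by omega))
          have := congrArg Fin.val this
          omega
        right; rw [contains1342_iff]
        refine ⟨a, b, c, d, hab, hbc, hcd, ?_, ?_, ?_⟩
        · rw [hσa, hσa]
          exact swap_lt hvu g1 (fun ⟨e1, e2⟩ => c1 ⟨by rw [e1]; exact hu, by rw [e2]; exact hv⟩)
        · rw [hσa, hσa]
          exact swap_lt hvu g2 (fun ⟨e1, e2⟩ => c2 ⟨by rw [e1]; exact hu, by rw [e2]; exact hv⟩)
        · rw [hσa, hσa]
          exact swap_lt hvu g3 (fun ⟨e1, e2⟩ => c3 ⟨by rw [e1]; exact hu, by rw [e2]; exact hv⟩)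

lemma swap_twice {n : ℕ} (u v : Fin n) (π : Equiv.Perm (Fin n)) :
    (π.trans (Equiv.swap u v)).trans (Equiv.swap u v) = π := by
  rw [Equiv.trans_assoc, Equiv.swap_swap, Equiv.trans_refl]

lemma step {n i : ℕ} (hi : 1 ≤ i) {u v z0 z1 : Fin n} (hu : (u:ℕ) = i) (hv : (v:ℕ) = i+1)
    (hz0 : (z0:ℕ) = 0) (hz1 : (z1:ℕ) = 1)
    (π : Equiv.Perm (Fin n))
    (hA : ¬ ContainsPat π ![1,2,4,3]) (hB : ¬ ContainsPat π ![1,3,4,2])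
    (h0 : (π z0 : ℕ) + 1 = i) (h1 : (π z1 : ℕ) = i ∨ (π z1 : ℕ) = i + 1) :
    ¬ ContainsPat (π.trans (Equiv.swap u v)) ![1,2,4,3] ∧
      ¬ ContainsPat (π.trans (Equiv.swap u v)) ![1,3,4,2] := by
  have hσa : ∀ x, (π.trans (Equiv.swap u v)) x = Equiv.swap u v (π x) := fun _ => rfl
  have hs0 : ((π.trans (Equiv.swap u v)) z0 : ℕ) + 1 = i := by
    rw [hσa, Equiv.swap_apply_of_ne_of_ne]
    · exact h0
    · intro e; rw [e] at h0; omega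
    · intro e; rw [e] at h0; omega
  have hs1 : ((π.trans (Equiv.swap u v)) z1 : ℕ) = i ∨
      ((π.trans (Equiv.swap u v)) z1 : ℕ) = i + 1 := by
    rcases h1 with h | h
    · right
      have : π z1 = u := Fin.ext (by omega)
      rw [hσa, this, Equiv.swap_apply_left, hv]
    · left
      have : π z1 = v := Fin.ext (by omega)
      rw [hσa, this, Equiv.swap_apply_right, hu]
  constructor
  · intro hC
    have := key hi hu hv hz0 hz1 (π.trans (Equiv.swap u v)) hs0 hs1 (Or.inl hC)
    rw [swap_twice] at this
    exact this.elim hA hB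
  · intro hC
    have := key hi hu hv hz0 hz1 (π.trans (Equiv.swap u v)) hs0 hs1 (Or.inr hC)
    rw [swap_twice] at this
    exact this.elim hA hB

theorem stmt_14 :
    ∀ n i, 1 ≤ i → i ≤ n - 2 → a n i (i + 1) = a n i (i + 2) := by
  intro n i hi hn2
  have hn : 3 ≤ n := by omega
  have hiu : i < n := by omega
  have hiv : i + 1 < n := by omega
  set u : Fin n := ⟨i, hiu⟩ with hu_def
  set v : Fin n := ⟨i+1, hiv⟩ with hv_def
  set z0 : Fin n := ⟨0, by omega⟩ with hz0_def
  set z1 : Fin n := ⟨1, by omega⟩ with hz1_def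
  have hu : (u:ℕ) = i := rfl
  have hv : (v:ℕ) = i + 1 := rfl
  have hz0 : (z0:ℕ) = 0 := rfl
  have hz1 : (z1:ℕ) = 1 := rfl
  unfold a
  apply Nat.card_congr
  have mem1 : ∀ π : Equiv.Perm (Fin n),
      (¬ ContainsPat π ![1,2,4,3] ∧ ¬ ContainsPat π ![1,3,4,2] ∧
        FirstIs π i ∧ SecondIs π (i+1)) →
      (¬ ContainsPat (π.trans (Equiv.swap u v)) ![1,2,4,3] ∧
        ¬ ContainsPat (π.trans (Equiv.swap u v)) ![1,3,4,2] ∧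
        FirstIs (π.trans (Equiv.swap u v)) i ∧
        SecondIs (π.trans (Equiv.swap u v)) (i+2)) := by
    intro π ⟨hA, hB, hF, hS⟩
    have h0 : (π z0 : ℕ) + 1 = i := hF z0 hz0
    have h1' : (π z1 : ℕ) + 1 = i + 1 := hS z1 hz1
    have hav := step hi hu hv hz0 hz1 π hA hB h0 (Or.inl (by omega))
    refine ⟨hav.1, hav.2, ?_, ?_⟩
    · intro j hj
      have hj0 : j = z0 := Fin.ext (by rw [hj, hz0])
      subst hj0
      show ((Equiv.swap u v) (π z0) : ℕ) + 1 = i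
      rw [Equiv.swap_apply_of_ne_of_ne]
      · exact h0
      · intro e; rw [e, hu] at h0; omega
      · intro e; rw [e, hv] at h0; omega
    · intro j hj
      have hj1 : j = z1 := Fin.ext (by rw [hj, hz1])
      subst hj1
      show ((Equiv.swap u v) (π z1) : ℕ) + 1 = i + 2
      have : π z1 = u := Fin.ext (by rw [hu]; omega)
      rw [this, Equiv.swap_apply_left, hv]
  have mem2 : ∀ π : Equiv.Perm (Fin n),
      (¬ ContainsPat π ![1,2,4,3] ∧ ¬ ContainsPat π ![1,3,4,2] ∧
        FirstIs π i ∧ SecondIs π (i+2)) →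
      (¬ ContainsPat (π.trans (Equiv.swap u v)) ![1,2,4,3] ∧
        ¬ ContainsPat (π.trans (Equiv.swap u v)) ![1,3,4,2] ∧
        FirstIs (π.trans (Equiv.swap u v)) i ∧
        SecondIs (π.trans (Equiv.swap u v)) (i+1)) := by
    intro π ⟨hA, hB, hF, hS⟩
    have h0 : (π z0 : ℕ) + 1 = i := hF z0 hz0
    have h1' : (π z1 : ℕ) + 1 = i + 2 := hS z1 hz1
    have hav := step hi hu hv hz0 hz1 π hA hB h0 (Or.inr (by omega))
    refine ⟨hav.1, hav.2, ?_, ?_⟩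
    · intro j hj
      have hj0 : j = z0 := Fin.ext (by rw [hj, hz0])
      subst hj0
      show ((Equiv.swap u v) (π z0) : ℕ) + 1 = i
      rw [Equiv.swap_apply_of_ne_of_ne]
      · exact h0
      · intro e; rw [e, hu] at h0; omega
      · intro e; rw [e, hv] at h0; omega
    · intro j hj
      have hj1 : j = z1 := Fin.ext (by rw [hj, hz1])
      subst hj1
      show ((Equiv.swap u v) (π z1) : ℕ) + 1 = i + 1
      have : π z1 = v := Fin.ext (by rw [hv]; omega)
      rw [this, Equiv.swap_apply_right, hu]
  exact
    { toFun := fun p => ⟨p.1.trans (Equiv.swap u v), mem1 p.1 p.2⟩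
      invFun := fun p => ⟨p.1.trans (Equiv.swap u v), mem2 p.1 p.2⟩
      left_inv := fun p => Subtype.ext (swap_twice u v p.1)
      right_inv := fun p => Subtype.ext (swap_twice u v p.1) }
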